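/- Quasi-reductivity implies quasi-decreasingness: if an oriented 3-CTRS R is quasi-reductive with respect to a reduction order ≻, then R is quasi-decreasing with respect to the order ≻_st = (≻ ∪ ⊳)⁺, i.e., ≻_st is well-founded, contains the rewrite relation →_R, satisfies (≻_st ∪ ⊳)⁺ = ≻_st, and for every rule ℓ → r ⇐ s₁ ≈ t₁, …, sₙ ≈ tₙ in R, every substitution σ, and every 0 ≤ i < n, if sⱼσ →_R* tⱼσ for all 1 ≤ j ≤ i, then ℓσ ≻_st s_{i+1}σ. -/

import Mathlib

/-- First-order terms over signature `F` with variables `V`. -/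
inductive Term (F V : Type) : Type where
  | var : V → Term F V
  | app : F → List (Term F V) → Term F V

namespace Term

variable {F V : Type}

mutual
/-- Application of a substitution to a term. -/
def subst (σ : V → Term F V) : Term F V → Term F V
  | .var x => σ x
  | .app f ts => .app f (substList σ ts)

/-- Application of a substitution to a list of terms. -/
def substList (σ : V → Term F V) : List (Term F V) → List (Term F V)
  | [] => []
  | t :: ts => t.subst σ :: substList σ ts
end

/-- `t.HasVar x` means the variable `x` occurs in `t`. -/
inductive HasVar : Term F V → V → Prop where
  | var : ∀ x, HasVar (.var x) x
  | app : ∀ {f ts t x}, t ∈ ts → HasVar t x → HasVar (.app f ts) x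

/-- `DirectSubterm t s`: `t` is an immediate subterm (argument) of `s`. -/
def DirectSubterm (t s : Term F V) : Prop :=
  ∃ f ts, s = Term.app f ts ∧ t ∈ ts

/-- `ProperSubterm t s`: `t` is a proper subterm of `s` (so `s ⊳ t`). -/
def ProperSubterm : Term F V → Term F V → Prop :=
  Relation.TransGen DirectSubterm

/-- Reflexive subterm relation: `Subterm t s` iff `s ⊵ t`. -/
def Subterm : Term F V → Term F V → Prop :=
  Relation.ReflTransGen DirectSubterm

/-- Subterm of `t` at position `p`, if any. -/
def subtermAt : Term F V → List ℕ → Option (Term F V)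
  | t, [] => some t
  | .var _, _ :: _ => none
  | .app _ ts, i :: p =>
    match ts[i]? with
    | some t => t.subtermAt p
    | none => none

/-- Replace the subterm at position `p` by `u`, if the position exists. -/
def replaceAt : Term F V → List ℕ → Term F V → Option (Term F V)
  | _, [], u => some u
  | .var _, _ :: _, _ => none
  | .app f ts, i :: p, u =>
    match ts[i]? with
    | some t => (t.replaceAt p u).map (fun t' => Term.app f (ts.set i t'))
    | none => none

end Term

/-- A rewrite relation is closed under contexts if it is closed under
placing both sides in the same argument position of a function application. -/
def ClosedUnderCtx {F V : Type} (r : Term F V → Term F V → Prop) : Prop :=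
  ∀ (f : F) (ts₁ ts₂ : List (Term F V)) (s t : Term F V),
    r s t → r (Term.app f (ts₁ ++ s :: ts₂)) (Term.app f (ts₁ ++ t :: ts₂))

/-- Closure under substitutions. -/
def ClosedUnderSubst {F V : Type} (r : Term F V → Term F V → Prop) : Prop :=
  ∀ (s t : Term F V) (σ : V → Term F V), r s t → r (s.subst σ) (t.subst σ)

/-- `a` is a normal form of `r` if it has no `r`-successor. -/
def NormalForm {A : Type} (r : A → A → Prop) (a : A) : Prop :=
  ∀ b, ¬ r a b

/-- A substitution is normalized if it maps every variable to a normal form. -/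
def NormalizedSubst {F V : Type} (r : Term F V → Term F V → Prop)
    (σ : V → Term F V) : Prop :=
  ∀ x, NormalForm r (σ x)

/-- A term is strongly irreducible w.r.t. `r` if all its instances by
normalized substitutions are normal forms. -/
def StronglyIrreducible {F V : Type} (r : Term F V → Term F V → Prop)
    (t : Term F V) : Prop :=
  ∀ σ, NormalizedSubst r σ → NormalForm r (t.subst σ)

/-- Joinability. -/
def Joinable {A : Type} (r : A → A → Prop) (t u : A) : Prop :=
  ∃ v, Relation.ReflTransGen r t v ∧ Relation.ReflTransGen r u v

/-- Confluence. -/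
def Confluent {A : Type} (r : A → A → Prop) : Prop :=
  ∀ s t u, Relation.ReflTransGen r s t → Relation.ReflTransGen r s u →
    Joinable r t u
/-- A conditional rewrite rule `ℓ → r ⇐ s₁ ≈ t₁, …, sₙ ≈ tₙ`. -/
structure CRule (F V : Type) where
  lhs : Term F V
  rhs : Term F V
  conds : List (Term F V × Term F V)

mutual
/-- The conditional rewrite relation of an oriented CTRS: the least relation
closed under contexts such that `ℓσ → rσ` whenever `sᵢσ →* tᵢσ` for all
conditions `sᵢ ≈ tᵢ` of the rule. -/
inductive CondRew {F V : Type} (R : Set (CRule F V)) :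
    Term F V → Term F V → Prop where
  | root (ρ : CRule F V) (σ : V → Term F V) :
      ρ ∈ R →
      (∀ c ∈ ρ.conds, CondRewStar R (c.1.subst σ) (c.2.subst σ)) →
      CondRew R (ρ.lhs.subst σ) (ρ.rhs.subst σ)
  | ctx (f : F) (ts₁ ts₂ : List (Term F V)) (s t : Term F V) :
      CondRew R s t →
      CondRew R (Term.app f (ts₁ ++ s :: ts₂)) (Term.app f (ts₁ ++ t :: ts₂))

/-- Reflexive-transitive closure of the conditional rewrite relation
(mutually defined, used in the conditions of rules). -/
inductive CondRewStar {F V : Type} (R : Set (CRule F V)) :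
    Term F V → Term F V → Prop where
  | refl (t : Term F V) : CondRewStar R t t
  | head {s t u : Term F V} :
      CondRew R s t → CondRewStar R t u → CondRewStar R s u
end

/-!
Rewrite steps of a quasi-reductive system decrease in `≻`: a root step `ℓσ → rσ` does by (b),
since its conditions hold with `→*` and hence with `⪰`, and context closure does the rest. So
`→*` lies in `⪰` and (a) yields the condition part of quasi-decreasingness. Well-foundedness
of `≻_st` comes from that of `≻ ∪ ⊳`: since `≻` is closed under contexts, a `≻`-step from a
subterm of `s` lifts to a `≻`-step from `s`, so descending chains cannot go on forever.
-/

open Relation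

theorem Relation.transGen_or_transGen_or_iff {α : Type*} (p q : α → α → Prop) (a b : α) :
    TransGen (fun a b => TransGen (fun a b => p a b ∨ q a b) a b ∨ q a b) a b ↔
      TransGen (fun a b => p a b ∨ q a b) a b :=
  ⟨TransGen.closed (fun _ _ h => h.elim id (.single ∘ .inr)) a b, .single ∘ .inl⟩

namespace Term

variable {F V : Type}

theorem wellFounded_directSubterm : WellFounded (@DirectSubterm F V) :=
  Subrelation.wf
    (fun {t s} ⟨f, ts, hs, ht⟩ => by
      subst hs
      have := List.sizeOf_lt_of_mem ht
      show sizeOf t < sizeOf (app f ts)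
      simp only [app.sizeOf_spec]
      omega)
    (measure (sizeOf : Term F V → ℕ)).wf

end Term

open Term

section ReductionOrder

variable {F V : Type} {r : Term F V → Term F V → Prop}

theorem ClosedUnderCtx.exists_rel_subterm_of_subterm (hctx : ClosedUnderCtx r)
    {s t u : Term F V} (hst : Subterm s t) (hsu : r s u) :
    ∃ t', r t t' ∧ Subterm u t' := by
  induction hst with
  | refl => exact ⟨u, hsu, .refl⟩
  | tail _ hdir ih =>
    obtain ⟨m, hm, hum⟩ := ih
    obtain ⟨f, ts, rfl, hmem⟩ := hdir
    obtain ⟨ts₁, ts₂, rfl⟩ := List.append_of_mem hmem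
    exact ⟨.app f (ts₁ ++ m :: ts₂), hctx f ts₁ ts₂ _ _ hm, hum.tail ⟨f, _, rfl, by simp⟩⟩

theorem ClosedUnderCtx.wellFounded_or_directSubterm (hctx : ClosedUnderCtx r)
    (hwf : WellFounded (fun t s => r s t)) :
    WellFounded (fun t s : Term F V => r s t ∨ DirectSubterm t s) := by
  have acc_of_subterm : ∀ s, Acc (fun t s => r s t) s →
      ∀ u, Subterm u s → Acc (fun t s : Term F V => r s t ∨ DirectSubterm t s) u := by
    intro s hs
    induction hs with
    | intro s _ ihs =>
      intro u
      induction wellFounded_directSubterm.apply u with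
      | intro u _ ihu =>
        refine fun hus => ⟨_, fun x hx => ?_⟩
        rcases hx with hux | hxu
        · obtain ⟨s', hss', hxs'⟩ := hctx.exists_rel_subterm_of_subterm hus hux
          exact ihs s' hss' x hxs'
        · exact ihu x hxu (.head hxu hus)
  exact ⟨fun s => acc_of_subterm s (hwf.apply s) s .refl⟩

theorem ClosedUnderCtx.wellFounded_transGen_or_properSubterm (hctx : ClosedUnderCtx r)
    (hwf : WellFounded (fun t s => r s t)) :
    WellFounded (fun t s => TransGen (fun a b => r a b ∨ ProperSubterm b a) s t) := by
  refine Subrelation.wf (fun {t s} h => ?_) (hctx.wellFounded_or_directSubterm hwf).transGen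
  refine TransGen.closed (fun a b hab => ?_) t s (transGen_swap.mpr h)
  rcases hab with hba | hab
  · exact .single (.inl hba)
  · exact TransGen.mono (fun _ _ => .inr) _ _ hab

end ReductionOrder

section QuasiReductive

variable {F V : Type} {R : Set (CRule F V)} {r : Term F V → Term F V → Prop}

theorem CondRew.rel_of_quasiReductive [IsTrans (Term F V) r] (hctx : ClosedUnderCtx r)
    (hqrb : ∀ ρ ∈ R, ∀ σ : V → Term F V,
      (∀ j, ∀ hj : j < ρ.conds.length,
        r ((ρ.conds[j]'hj).1.subst σ) ((ρ.conds[j]'hj).2.subst σ) ∨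
        (ρ.conds[j]'hj).1.subst σ = (ρ.conds[j]'hj).2.subst σ) →
      r (ρ.lhs.subst σ) (ρ.rhs.subst σ))
    {s t : Term F V} (h : CondRew R s t) : r s t :=
  CondRew.rec (motive_1 := fun a b _ => r a b) (motive_2 := fun a b _ => r a b ∨ a = b)
    (fun ρ σ hρ _ ih => hqrb ρ hρ σ fun _ hj => ih _ (List.getElem_mem hj))
    (fun f ts₁ ts₂ a b _ ih => hctx f ts₁ ts₂ a b ih)
    (fun _ => .inr rfl)
    (fun _ _ ih₁ ih₂ => .inl (ih₂.elim (_root_.trans ih₁) (· ▸ ih₁)))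
    h

theorem CondRew.rel_or_eq_of_reflTransGen [IsTrans (Term F V) r]
    (hrew : ∀ s t, CondRew R s t → r s t) {s t : Term F V} (h : ReflTransGen (CondRew R) s t) :
    r s t ∨ s = t := by
  induction h with
  | refl => exact .inr rfl
  | tail _ hstep ih =>
    rcases ih with h | rfl
    · exact .inl (_root_.trans h (hrew _ _ hstep))
    · exact .inl (hrew _ _ hstep)

end QuasiReductive

/-- Quasi-reductivity w.r.t. a reduction order `≻` implies
quasi-decreasingness w.r.t. `≻_st = (≻ ∪ ⊳)⁺`. -/
theorem quasiDecreasing_of_quasiReductive {F V : Type}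
    (R : Set (CRule F V))
    -- R is an oriented 3-CTRS
    (hlhs : ∀ ρ ∈ R, ¬ ∃ x, ρ.lhs = Term.var x)
    (hvarr : ∀ ρ ∈ R, ∀ x, ρ.rhs.HasVar x →
      ρ.lhs.HasVar x ∨ ∃ c ∈ ρ.conds, c.1.HasVar x ∨ c.2.HasVar x)
    -- ≻ is a reduction order
    (succ : Term F V → Term F V → Prop)
    (hwf : WellFounded (fun t s => succ s t))
    (htrans : Transitive succ)
    (hirr : Irreflexive succ)
    (hctx : ClosedUnderCtx succ)
    (hsubst : ClosedUnderSubst succ)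
    -- the order ≻_st = (≻ ∪ ⊳)⁺
    (succst : Term F V → Term F V → Prop)
    (hst : ∀ s t, succst s t ↔
      Relation.TransGen (fun a b => succ a b ∨ Term.ProperSubterm b a) s t)
    -- quasi-reductivity: (a) and (b)
    (hqra : ∀ ρ ∈ R, ∀ σ : V → Term F V, ∀ i, ∀ hi : i < ρ.conds.length,
      (∀ j, ∀ hj : j < i,
        succ ((ρ.conds[j]'(hj.trans hi)).1.subst σ)
             ((ρ.conds[j]'(hj.trans hi)).2.subst σ) ∨
        (ρ.conds[j]'(hj.trans hi)).1.subst σ =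
          (ρ.conds[j]'(hj.trans hi)).2.subst σ) →
      succst (ρ.lhs.subst σ) ((ρ.conds[i]'hi).1.subst σ))
    (hqrb : ∀ ρ ∈ R, ∀ σ : V → Term F V,
      (∀ j, ∀ hj : j < ρ.conds.length,
        succ ((ρ.conds[j]'hj).1.subst σ) ((ρ.conds[j]'hj).2.subst σ) ∨
        (ρ.conds[j]'hj).1.subst σ = (ρ.conds[j]'hj).2.subst σ) →
      succ (ρ.lhs.subst σ) (ρ.rhs.subst σ)) :
    -- quasi-decreasingness w.r.t. ≻_st
    WellFounded (fun t s => succst s t) ∧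
    (∀ s t, CondRew R s t → succst s t) ∧
    (∀ s t,
      Relation.TransGen (fun a b => succst a b ∨ Term.ProperSubterm b a) s t ↔
      succst s t) ∧
    (∀ ρ ∈ R, ∀ σ : V → Term F V, ∀ i, ∀ hi : i < ρ.conds.length,
      (∀ j, ∀ hj : j < i,
        Relation.ReflTransGen (CondRew R)
          ((ρ.conds[j]'(hj.trans hi)).1.subst σ)
          ((ρ.conds[j]'(hj.trans hi)).2.subst σ)) →
      succst (ρ.lhs.subst σ) ((ρ.conds[i]'hi).1.subst σ)) := by
  obtain rfl : succst = fun s t => TransGen (fun a b => succ a b ∨ ProperSubterm b a) s t :=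
    funext₂ fun s t => propext (hst s t)
  have : IsTrans (Term F V) succ := ⟨fun a b c => @htrans a b c⟩
  have hrew (s t : Term F V) : CondRew R s t → succ s t := CondRew.rel_of_quasiReductive hctx hqrb
  refine ⟨hctx.wellFounded_transGen_or_properSubterm hwf, fun s t h => .single (.inl (hrew s t h)),
    transGen_or_transGen_or_iff _ _, ?_⟩
  intro ρ hρ σ i hi hconds
  exact hqra ρ hρ σ i hi fun j hj => CondRew.rel_or_eq_of_reflTransGen hrew (hconds j hj)
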